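/- Let R ⊆ S be a subintegral extension of commutative rings and 𝒥 ⊆ R[X₁,…,Xₘ] an ideal generated by monomials. Then the induced extension R[X₁,…,Xₘ]/𝒥 ⊆ S[X₁,…,Xₘ]/(𝒥·S[X₁,…,Xₘ]) is also subintegral. -/
import Mathlib

open MvPolynomial

/-- A ring extension is subintegral if it is integral, induces a bijection on prime spectra,
and induces isomorphisms on all residue field extensions (expressed elementarily: modulo any
prime `p` of `S`, every element of `S/p` is a fraction of elements coming from `R`). -/
def IsSubintegral {R S : Type*} [CommRing R] [CommRing S] (f : R →+* S) : Prop :=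
  f.IsIntegral ∧ Function.Bijective (PrimeSpectrum.comap f) ∧
    ∀ (p : Ideal S), p.IsPrime → ∀ x : S, ∃ a b : R, f b ∉ p ∧ x * f b - f a ∈ p

section Aux

variable {R S : Type*} [CommRing R] [CommRing S] (f : R →+* S) {σ : Type*}

lemma aux_map_comp_C :
    (MvPolynomial.map (σ := σ) f).comp (C : R →+* MvPolynomial σ R)
      = (C : S →+* MvPolynomial σ S).comp f := by
  ext r
  simp

/-- Key approximation lemma: modulo `p·S[X]`, every polynomial in `S[X]` is a fraction of
polynomials coming from `R[X]` with constant denominator. -/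
lemma aux_key (h3 : ∀ (p : Ideal S), p.IsPrime → ∀ x : S, ∃ a b : R, f b ∉ p ∧ x * f b - f a ∈ p)
    (p : Ideal S) (hp : p.IsPrime) (x : MvPolynomial σ S) :
    ∃ (a : MvPolynomial σ R) (b : R), f b ∉ p ∧
      x * C (f b) - MvPolynomial.map f a ∈ p.map (C : S →+* MvPolynomial σ S) := by
  induction x using MvPolynomial.induction_on with
  | C s =>
      obtain ⟨a, b, hb, hab⟩ := h3 p hp s
      refine ⟨C a, b, hb, ?_⟩
      rw [map_C, ← C_mul, ← C_sub]
      exact Ideal.mem_map_of_mem _ hab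
  | add x y hx hy =>
      obtain ⟨a₁, b₁, hb₁, h₁⟩ := hx
      obtain ⟨a₂, b₂, hb₂, h₂⟩ := hy
      refine ⟨a₁ * C b₂ + a₂ * C b₁, b₁ * b₂, ?_, ?_⟩
      · rw [map_mul]; exact fun h => (hp.mem_or_mem h).elim hb₁ hb₂
      · have heq : (x + y) * C (f (b₁ * b₂)) - MvPolynomial.map f (a₁ * C b₂ + a₂ * C b₁)
            = (x * C (f b₁) - MvPolynomial.map f a₁) * C (f b₂)
              + (y * C (f b₂) - MvPolynomial.map f a₂) * C (f b₁) := by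
          simp only [map_mul, map_add, MvPolynomial.map_C]
          ring
        rw [heq]
        exact Ideal.add_mem _ (Ideal.mul_mem_right _ _ h₁) (Ideal.mul_mem_right _ _ h₂)
  | mul_X x n hx =>
      obtain ⟨a, b, hb, h⟩ := hx
      refine ⟨a * X n, b, hb, ?_⟩
      have heq : x * X n * C (f b) - MvPolynomial.map f (a * X n)
          = (x * C (f b) - MvPolynomial.map f a) * X n := by
        simp only [map_mul, MvPolynomial.map_X]
        ring
      rw [heq]
      exact Ideal.mul_mem_right _ _ h

/-- Pulling back membership in `p·S[X]` along `map f`. -/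
lemma aux_pullback {p : Ideal S} {z : MvPolynomial σ R}
    (h : MvPolynomial.map f z ∈ p.map (C : S →+* MvPolynomial σ S)) :
    z ∈ (p.comap f).map (C : R →+* MvPolynomial σ R) := by
  rw [MvPolynomial.mem_map_C_iff] at h ⊢
  intro m
  have := h m
  rwa [MvPolynomial.coeff_map] at this

/-- Subintegrality passes to multivariate polynomial extensions. -/
lemma aux_mv (hsub : IsSubintegral f) : IsSubintegral (MvPolynomial.map (σ := σ) f) := by
  obtain ⟨hint, ⟨hsinj, hssurj⟩, h3⟩ := hsub
  refine ⟨?_, ⟨?_, ?_⟩, ?_⟩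
  · -- integrality
    intro x
    induction x using MvPolynomial.induction_on with
    | C s =>
        obtain ⟨q, qmonic, hq⟩ := hint s
        refine ⟨q.map (C : R →+* MvPolynomial σ R), qmonic.map _, ?_⟩
        rw [Polynomial.eval₂_map, aux_map_comp_C, ← Polynomial.hom_eval₂, hq, map_zero]
    | add x y hx hy => exact hx.add _ hy
    | mul_X x n hx =>
        refine hx.mul _ ?_
        have := (MvPolynomial.map (σ := σ) f).isIntegralElem_map (x := X n)
        rwa [MvPolynomial.map_X] at this
  · -- injectivity on Spec
    intro Q₁ Q₂ hQ
    have hQ' : Ideal.comap (MvPolynomial.map f) Q₁.asIdeal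
        = Ideal.comap (MvPolynomial.map f) Q₂.asIdeal := congrArg PrimeSpectrum.asIdeal hQ
    -- the contracted primes of S agree
    have hpeq : Ideal.comap (C : S →+* MvPolynomial σ S) Q₁.asIdeal
        = Ideal.comap (C : S →+* MvPolynomial σ S) Q₂.asIdeal := by
      have h1 : ∀ Q : PrimeSpectrum (MvPolynomial σ S),
          Ideal.comap f (Ideal.comap (C : S →+* MvPolynomial σ S) Q.asIdeal)
            = Ideal.comap (C : R →+* MvPolynomial σ R)
                (Ideal.comap (MvPolynomial.map f) Q.asIdeal) := by
        intro Q
        rw [Ideal.comap_comap, Ideal.comap_comap, aux_map_comp_C]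
      have := hsinj (a₁ := PrimeSpectrum.comap (C : S →+* MvPolynomial σ S) Q₁)
        (a₂ := PrimeSpectrum.comap (C : S →+* MvPolynomial σ S) Q₂) ?_
      · exact congrArg PrimeSpectrum.asIdeal this
      · apply PrimeSpectrum.ext
        show Ideal.comap f (Ideal.comap C Q₁.asIdeal) = Ideal.comap f (Ideal.comap C Q₂.asIdeal)
        rw [h1 Q₁, h1 Q₂, hQ']
    set p := Ideal.comap (C : S →+* MvPolynomial σ S) Q₁.asIdeal with hpdef
    have hstep : ∀ A B : PrimeSpectrum (MvPolynomial σ S),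
        Ideal.comap (C : S →+* MvPolynomial σ S) A.asIdeal = p →
        Ideal.comap (C : S →+* MvPolynomial σ S) B.asIdeal = p →
        Ideal.comap (MvPolynomial.map f) A.asIdeal
          = Ideal.comap (MvPolynomial.map f) B.asIdeal →
        A.asIdeal ≤ B.asIdeal := by
      intro A B hA hB hAB x hx
      obtain ⟨a, b, hb, hmem⟩ := aux_key f h3 p (hA ▸ (Ideal.comap_isPrime _ _)) x
      have hmapA : p.map (C : S →+* MvPolynomial σ S) ≤ A.asIdeal := by
        rw [← hA]; exact Ideal.map_comap_le
      have hmapB : p.map (C : S →+* MvPolynomial σ S) ≤ B.asIdeal := by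
        rw [← hB]; exact Ideal.map_comap_le
      have hfa : MvPolynomial.map f a ∈ A.asIdeal := by
        have : x * C (f b) - (x * C (f b) - MvPolynomial.map f a) = MvPolynomial.map f a := by
          ring
        rw [← this]
        exact Ideal.sub_mem _ (Ideal.mul_mem_right _ _ hx) (hmapA hmem)
      have hfa' : MvPolynomial.map f a ∈ B.asIdeal := by
        have : a ∈ Ideal.comap (MvPolynomial.map f) B.asIdeal := hAB ▸ hfa
        exact this
      have hxb : x * C (f b) ∈ B.asIdeal := by
        have : x * C (f b) - MvPolynomial.map f a + MvPolynomial.map f a = x * C (f b) := by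
          ring
        rw [← this]
        exact Ideal.add_mem _ (hmapB hmem) hfa'
      rcases B.isPrime.mem_or_mem hxb with h | h
      · exact h
      · exact absurd (hB ▸ h : f b ∈ p) hb
    apply PrimeSpectrum.ext
    exact le_antisymm (hstep Q₁ Q₂ rfl hpeq.symm hQ') (hstep Q₂ Q₁ hpeq.symm rfl hQ'.symm)
  · -- surjectivity on Spec
    intro P'
    set P := P'.asIdeal with hPdef
    set 𝔭 := Ideal.comap (C : R →+* MvPolynomial σ R) P with h𝔭def
    obtain ⟨pS, hpS⟩ := hssurj ⟨𝔭, Ideal.comap_isPrime _ _⟩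
    set p := pS.asIdeal with hpdef
    have hfp : Ideal.comap f p = 𝔭 := congrArg PrimeSpectrum.asIdeal hpS
    have hCb : ∀ b : R, f b ∉ p → C b ∉ P := by
      intro b hb hCbP
      apply hb
      have hmem𝔭 : b ∈ 𝔭 := hCbP
      rw [← hfp] at hmem𝔭
      exact hmem𝔭
    have h𝔭P : Ideal.map (C : R →+* MvPolynomial σ R) 𝔭 ≤ P := Ideal.map_comap_le
    -- the candidate prime of S[X]
    let Q : Ideal (MvPolynomial σ S) :=
      { carrier := {x | ∃ (a : MvPolynomial σ R) (b : R), f b ∉ p ∧ a ∈ P ∧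
          x * C (f b) - MvPolynomial.map f a ∈ p.map (C : S →+* MvPolynomial σ S)}
        zero_mem' := by
          refine ⟨0, 1, ?_, P.zero_mem, by simp⟩
          rw [map_one]
          exact fun h => pS.isPrime.ne_top ((Ideal.eq_top_iff_one _).mpr (by simpa using h))
        add_mem' := by
          rintro x y ⟨a₁, b₁, hb₁, ha₁, h₁⟩ ⟨a₂, b₂, hb₂, ha₂, h₂⟩
          refine ⟨a₁ * C b₂ + a₂ * C b₁, b₁ * b₂, ?_, ?_, ?_⟩
          · rw [map_mul]; exact fun h => (pS.isPrime.mem_or_mem h).elim hb₁ hb₂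
          · exact Ideal.add_mem _ (Ideal.mul_mem_right _ _ ha₁) (Ideal.mul_mem_right _ _ ha₂)
          · have heq : (x + y) * C (f (b₁ * b₂))
                - MvPolynomial.map f (a₁ * C b₂ + a₂ * C b₁)
                = (x * C (f b₁) - MvPolynomial.map f a₁) * C (f b₂)
                  + (y * C (f b₂) - MvPolynomial.map f a₂) * C (f b₁) := by
              simp only [map_mul, map_add, MvPolynomial.map_C]
              ring
            rw [heq]
            exact Ideal.add_mem _ (Ideal.mul_mem_right _ _ h₁) (Ideal.mul_mem_right _ _ h₂)
        smul_mem' := by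
          rintro c x ⟨a, b, hb, haP, hmem⟩
          obtain ⟨ac, bc, hbc, hc⟩ := aux_key f h3 p pS.isPrime c
          refine ⟨ac * a, bc * b, ?_, Ideal.mul_mem_left _ _ haP, ?_⟩
          · rw [map_mul]; exact fun h => (pS.isPrime.mem_or_mem h).elim hbc hb
          · have heq : (c • x) * C (f (bc * b)) - MvPolynomial.map f (ac * a)
                = (c * C (f bc) - MvPolynomial.map f ac) * (x * C (f b))
                  + MvPolynomial.map f ac * (x * C (f b) - MvPolynomial.map f a) := by
              simp only [smul_eq_mul, map_mul]
              ring
            rw [heq]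
            exact Ideal.add_mem _ (Ideal.mul_mem_right _ _ hc) (Ideal.mul_mem_left _ _ hmem) }
    have hQmem : ∀ x : MvPolynomial σ S, x ∈ Q ↔
        ∃ (a : MvPolynomial σ R) (b : R), f b ∉ p ∧ a ∈ P ∧
          x * C (f b) - MvPolynomial.map f a ∈ p.map (C : S →+* MvPolynomial σ S) :=
      fun _ => Iff.rfl
    have hQprime : Q.IsPrime := by
      constructor
      · rw [Ideal.ne_top_iff_one]
        rintro ⟨a, b, hb, haP, hmem⟩
        rw [one_mul] at hmem
        have : MvPolynomial.map f (C b - a) ∈ p.map (C : S →+* MvPolynomial σ S) := by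
          rwa [map_sub, MvPolynomial.map_C]
        have h2 := aux_pullback f this
        rw [hfp] at h2
        have : C b - a ∈ P := h𝔭P h2
        have : (C b : MvPolynomial σ R) ∈ P := by
          have h3' : C b - a + a = (C b : MvPolynomial σ R) := by ring
          rw [← h3']; exact Ideal.add_mem _ this haP
        exact hCb b hb this
      · rintro x y ⟨a, b, hb, haP, hmem⟩
        obtain ⟨a₁, b₁, hb₁, h₁⟩ := aux_key f h3 p pS.isPrime x
        obtain ⟨a₂, b₂, hb₂, h₂⟩ := aux_key f h3 p pS.isPrime y
        have hE : MvPolynomial.map f (a₁ * a₂ * C b - a * (C b₁ * C b₂))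
            ∈ p.map (C : S →+* MvPolynomial σ S) := by
          have heq : MvPolynomial.map f (a₁ * a₂ * C b - a * (C b₁ * C b₂))
              = (x * C (f b₁) - MvPolynomial.map f a₁) * (-(MvPolynomial.map f a₂ * C (f b)))
                + (y * C (f b₂) - MvPolynomial.map f a₂) * (-(x * C (f b₁) * C (f b)))
                + (x * y * C (f b) - MvPolynomial.map f a) * (C (f b₁) * C (f b₂)) := by
            simp only [map_mul, map_sub, MvPolynomial.map_C]
            ring
          rw [heq]
          exact Ideal.add_mem _ (Ideal.add_mem _ (Ideal.mul_mem_right _ _ h₁)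
            (Ideal.mul_mem_right _ _ h₂)) (Ideal.mul_mem_right _ _ hmem)
        have h2 := aux_pullback f hE
        rw [hfp] at h2
        have hsub' : a₁ * a₂ * C b - a * (C b₁ * C b₂) ∈ P := h𝔭P h2
        have : a₁ * a₂ * C b ∈ P := by
          have h3' : a₁ * a₂ * C b - a * (C b₁ * C b₂) + a * (C b₁ * C b₂)
              = a₁ * a₂ * C b := by ring
          rw [← h3']
          exact Ideal.add_mem _ hsub' (Ideal.mul_mem_right _ _ haP)
        rcases P'.isPrime.mem_or_mem this with h | h
        · rcases P'.isPrime.mem_or_mem h with h' | h'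
          · exact Or.inl ⟨a₁, b₁, hb₁, h', h₁⟩
          · exact Or.inr ⟨a₂, b₂, hb₂, h', h₂⟩
        · exact absurd h (hCb b hb)
    refine ⟨⟨Q, hQprime⟩, ?_⟩
    apply PrimeSpectrum.ext
    show Ideal.comap (MvPolynomial.map f) Q = P
    ext z
    constructor
    · rintro ⟨a, b, hb, haP, hmem⟩
      have : MvPolynomial.map f (z * C b - a) ∈ p.map (C : S →+* MvPolynomial σ S) := by
        rwa [map_sub, map_mul, MvPolynomial.map_C]
      have h2 := aux_pullback f this
      rw [hfp] at h2
      have hzb : z * C b ∈ P := by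
        have h3' : z * C b - a + a = z * C b := by ring
        rw [← h3']
        exact Ideal.add_mem _ (h𝔭P h2) haP
      rcases P'.isPrime.mem_or_mem hzb with h | h
      · exact h
      · exact absurd h (hCb b hb)
    · intro hz
      refine ⟨z, 1, ?_, hz, by simp⟩
      rw [map_one]
      exact fun h => pS.isPrime.ne_top ((Ideal.eq_top_iff_one _).mpr (by simpa using h))
  · -- residue fields
    intro Q hQ x
    have hp : (Ideal.comap (C : S →+* MvPolynomial σ S) Q).IsPrime := Ideal.comap_isPrime _ _
    obtain ⟨a, b, hb, hmem⟩ := aux_key f h3 _ hp x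
    refine ⟨a, C b, ?_, ?_⟩
    · rw [MvPolynomial.map_C]
      exact hb
    · rw [MvPolynomial.map_C]
      exact Ideal.map_comap_le hmem

/-- Subintegrality passes to quotients. -/
lemma aux_quot {A B : Type*} [CommRing A] [CommRing B] (g : A →+* B) (J : Ideal A)
    (hsub : IsSubintegral g) :
    IsSubintegral (Ideal.quotientMap (J.map g) g Ideal.le_comap_map) := by
  obtain ⟨hint, ⟨hsinj, hssurj⟩, h3⟩ := hsub
  set I := J.map g with hIdef
  set qm := Ideal.quotientMap I g Ideal.le_comap_map with hqmdef
  have hcomm : qm.comp (Ideal.Quotient.mk J) = (Ideal.Quotient.mk I).comp g :=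
    Ideal.quotientMap_comp_mk Ideal.le_comap_map
  refine ⟨?_, ⟨?_, ?_⟩, ?_⟩
  · -- integrality
    intro x
    obtain ⟨x, rfl⟩ := Ideal.Quotient.mk_surjective x
    obtain ⟨q, qmonic, hq⟩ := hint x
    refine ⟨q.map (Ideal.Quotient.mk J), qmonic.map _, ?_⟩
    rw [Polynomial.eval₂_map, hcomm, ← Polynomial.hom_eval₂, hq, map_zero]
  · -- injectivity on Spec
    intro x y h
    have key : ∀ z : PrimeSpectrum (B ⧸ I),
        PrimeSpectrum.comap g (PrimeSpectrum.comap (Ideal.Quotient.mk I) z)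
          = PrimeSpectrum.comap (Ideal.Quotient.mk J) (PrimeSpectrum.comap qm z) := by
      intro z
      rw [← PrimeSpectrum.comap_comp_apply, ← PrimeSpectrum.comap_comp_apply, hcomm]
    have h2 : PrimeSpectrum.comap (Ideal.Quotient.mk I) x
        = PrimeSpectrum.comap (Ideal.Quotient.mk I) y := by
      apply hsinj
      rw [key, key, h]
    exact PrimeSpectrum.comap_injective_of_surjective _ Ideal.Quotient.mk_surjective h2
  · -- surjectivity on Spec
    intro p'
    set P := PrimeSpectrum.comap (Ideal.Quotient.mk J) p' with hPdef
    obtain ⟨QB, hQB⟩ := hssurj P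
    have hQB' : Ideal.comap g QB.asIdeal = P.asIdeal := congrArg PrimeSpectrum.asIdeal hQB
    have hIQB : I ≤ QB.asIdeal := by
      rw [hIdef, Ideal.map_le_iff_le_comap, hQB']
      intro j hj
      show Ideal.Quotient.mk J j ∈ p'.asIdeal
      rw [Ideal.Quotient.eq_zero_iff_mem.mpr hj]
      exact p'.asIdeal.zero_mem
    have hker : RingHom.ker (Ideal.Quotient.mk I) ≤ QB.asIdeal :=
      Ideal.mk_ker.le.trans hIQB
    have hQbarPrime : (QB.asIdeal.map (Ideal.Quotient.mk I)).IsPrime :=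
      Ideal.map_isPrime_of_surjective Ideal.Quotient.mk_surjective hker
    refine ⟨⟨QB.asIdeal.map (Ideal.Quotient.mk I), hQbarPrime⟩, ?_⟩
    apply PrimeSpectrum.ext
    apply Ideal.comap_injective_of_surjective (Ideal.Quotient.mk J)
      Ideal.Quotient.mk_surjective
    show Ideal.comap (Ideal.Quotient.mk J)
        (Ideal.comap qm (QB.asIdeal.map (Ideal.Quotient.mk I)))
      = Ideal.comap (Ideal.Quotient.mk J) p'.asIdeal
    rw [Ideal.comap_comap, hcomm, ← Ideal.comap_comap]
    have hcm : Ideal.comap (Ideal.Quotient.mk I) (QB.asIdeal.map (Ideal.Quotient.mk I))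
        = QB.asIdeal := by
      rw [Ideal.comap_map_of_surjective _ Ideal.Quotient.mk_surjective,
        ← RingHom.ker_eq_comap_bot, Ideal.mk_ker, sup_eq_left.mpr hIQB]
    rw [hcm, hQB']
    rfl
  · -- residue fields
    intro pbar hpbar x
    obtain ⟨x, rfl⟩ := Ideal.Quotient.mk_surjective x
    have hPprime : (pbar.comap (Ideal.Quotient.mk I)).IsPrime := Ideal.comap_isPrime _ _
    obtain ⟨a, b, hb, hmem⟩ := h3 _ hPprime x
    refine ⟨Ideal.Quotient.mk J a, Ideal.Quotient.mk J b, ?_, ?_⟩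
    · rw [Ideal.quotientMap_mk]
      exact hb
    · rw [Ideal.quotientMap_mk, Ideal.quotientMap_mk]
      show Ideal.Quotient.mk I x * Ideal.Quotient.mk I (g b) - Ideal.Quotient.mk I (g a) ∈ pbar
      rw [← map_mul, ← map_sub]
      exact hmem

end Aux

/-- If `R ⊆ S` is subintegral and `𝒥 ⊆ R[X₁,…,Xₘ]` is generated by monomials, then
`R[X₁,…,Xₘ]/𝒥 ⊆ S[X₁,…,Xₘ]/𝒥S[X₁,…,Xₘ]` is subintegral. -/
theorem stmt9 {R S : Type*} [CommRing R] [CommRing S] (f : R →+* S)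
    (hinj : Function.Injective f) (hsub : IsSubintegral f)
    {m : ℕ} (𝒥 : Ideal (MvPolynomial (Fin m) R))
    (h𝒥 : ∃ T : Set (Fin m →₀ ℕ),
      𝒥 = Ideal.span ((fun s => MvPolynomial.monomial s (1 : R)) '' T)) :
    IsSubintegral
      (Ideal.quotientMap (𝒥.map (MvPolynomial.map f)) (MvPolynomial.map f)
        Ideal.le_comap_map) := by
  exact aux_quot (MvPolynomial.map f) 𝒥 (aux_mv f hsub)
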